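/- arXiv:2001.00625 — 3 statements merged into one kernel-verified Lean document; each statement's English description precedes it below -/
import Mathlib

section
/- Let n ≥ 2. The monoid presented by generators m_{i,j} for 1 ≤ i < j ≤ n subject to the relations (P1) m_{i,j}·m_{i,j} = m_{i,j} for all i < j; (P2) m_{i,j}·m_{r,s} = m_{r,s}·m_{i,j} for all i < j and r < s; (P3) m_{i,j}·m_{j,k} = m_{i,j}·m_{i,k} = m_{j,k}·m_{i,k} for all i < j < k, is isomorphic as a monoid to the set-partition monoid P_n, via an isomorphism sending the generator m_{i,j} to the partition μ_{i,j} whose only non-singleton block is {i, j}. -/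
/-!
The relations make the presented monoid commutative with idempotent generators, and
`m_{i,j} ↦ μ_{i,j}` respects them, giving a homomorphism `φ`. It is onto because every
partition is the join of the `μ_{a,b}` over its related pairs. For injectivity, let `x` absorb
the pair `{a, b}` when `x * m_{a,b} = x`. By (P3) the three generators of a triangle
`i < j < k` have equal pairwise products, so absorbing two sides of a triangle means absorbing
the third: absorption is a partition, and it contains `φ x`. Hence `φ y ≤ φ x` forces
`x * y = x`, and `φ x = φ y` gives `x = x * y = y`.
-/

/-- The commutative idempotent monoid of set partitions of `α`, realized as `Setoid α`
with multiplication the lattice join and identity the discrete partition `⊥`. -/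
instance setoidCommMonoid (α : Type*) : CommMonoid (Setoid α) where
  mul := (· ⊔ ·)
  one := ⊥
  mul_assoc := sup_assoc
  one_mul := bot_sup_eq
  mul_one := sup_bot_eq
  mul_comm := sup_comm

/-- `muSet X` is the partition of `α` whose only (possibly) non-singleton block is `X`:
the setoid generated by relating all elements of `X`. -/
def muSet {α : Type*} (X : Set α) : Setoid α :=
  Relation.EqvGen.setoid (fun x y => x ∈ X ∧ y ∈ X)

/-- `mu i j` is the partition whose only non-singleton block is `{i, j}`. -/
def mu {α : Type*} (i j : α) : Setoid α := muSet {i, j}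

/-- Generators `m_{i,j}` for `i < j` in `Fin n`. -/
abbrev PGen (n : ℕ) := {p : Fin n × Fin n // p.1 < p.2}

open FreeMonoid in
/-- The defining relations (P1), (P2), (P3) of the monoid of set partitions of type A. -/
inductive PRel (n : ℕ) : FreeMonoid (PGen n) → FreeMonoid (PGen n) → Prop
  /-- (P1) `m_{i,j} m_{i,j} = m_{i,j}`. -/
  | P1 (a : PGen n) : PRel n (of a * of a) (of a)
  /-- (P2) `m_{i,j} m_{r,s} = m_{r,s} m_{i,j}`. -/
  | P2 (a b : PGen n) : PRel n (of a * of b) (of b * of a)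
  /-- (P3), first equality: `m_{i,j} m_{j,k} = m_{i,j} m_{i,k}` for `i < j < k`. -/
  | P3a (i j k : Fin n) (hij : i < j) (hjk : j < k) :
      PRel n (of ⟨(i, j), hij⟩ * of ⟨(j, k), hjk⟩)
        (of ⟨(i, j), hij⟩ * of ⟨(i, k), hij.trans hjk⟩)
  /-- (P3), second equality: `m_{i,j} m_{j,k} = m_{j,k} m_{i,k}` for `i < j < k`. -/
  | P3b (i j k : Fin n) (hij : i < j) (hjk : j < k) :
      PRel n (of ⟨(i, j), hij⟩ * of ⟨(j, k), hjk⟩)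
        (of ⟨(j, k), hjk⟩ * of ⟨(i, k), hij.trans hjk⟩)

section Partitions

variable {α : Type*}

theorem Setoid.mul_eq_sup (r s : Setoid α) : r * s = r ⊔ s := rfl

theorem mu_le_iff {i j : α} {s : Setoid α} : mu i j ≤ s ↔ s i j := by
  refine ⟨fun h => Setoid.le_def.mp h (Relation.EqvGen.rel _ _ ⟨by simp, by simp⟩),
    fun h => Setoid.eqvGen_le ?_⟩
  rintro x y ⟨hx, hy⟩
  simp only [Set.mem_insert_iff, Set.mem_singleton_iff] at hx hy
  rcases hx with rfl | rfl <;> rcases hy with rfl | rfl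
  exacts [s.refl _, h, s.symm h, s.refl _]

theorem mu_rel (i j : α) : mu i j i j := mu_le_iff.mp le_rfl

theorem mu_comm (i j : α) : mu i j = mu j i := by
  rw [mu, mu, Set.pair_comm]

theorem mu_self (i : α) : mu i i = ⊥ :=
  le_bot_iff.mp (mu_le_iff.mpr (Setoid.refl' _ i))

theorem mu_le_sup_mu (i j k : α) : mu i k ≤ mu i j ⊔ mu j k :=
  mu_le_iff.mpr <| Setoid.trans' _ (Setoid.le_def.mp le_sup_left (mu_rel i j))
    (Setoid.le_def.mp le_sup_right (mu_rel j k))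

theorem mu_sup_mu_eq_left (i j k : α) : mu i j ⊔ mu j k = mu i j ⊔ mu i k := by
  apply le_antisymm <;> refine sup_le le_sup_left ?_
  · rw [mu_comm i j]
    exact mu_le_sup_mu j i k
  · exact mu_le_sup_mu i j k

theorem mu_sup_mu_eq_right (i j k : α) : mu i j ⊔ mu j k = mu j k ⊔ mu i k := by
  apply le_antisymm
  · refine sup_le ?_ le_sup_left
    rw [sup_comm, mu_comm j k]
    exact mu_le_sup_mu i k j
  · exact sup_le le_sup_right (mu_le_sup_mu i j k)

theorem iSup_mu_eq (s : Setoid α) : ⨆ q : {q : α × α // s q.1 q.2}, mu q.1.1 q.1.2 = s := by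
  refine le_antisymm (iSup_le fun q => mu_le_iff.mpr q.2) (Setoid.le_def.mpr fun {a b} h => ?_)
  exact Setoid.le_def.mp (le_iSup (fun q : {q : α × α // s q.1 q.2} => mu q.1.1 q.1.2) ⟨(a, b), h⟩)
    (mu_rel a b)

end Partitions

theorem transitive_of_forall_lt_lt {β : Type*} [LinearOrder β] {r : β → β → Prop}
    (refl : ∀ a, r a a) (symm : ∀ {a b}, r a b → r b a)
    (tri : ∀ ⦃i j k⦄, i < j → j < k →
      (r i j → r j k → r i k) ∧ (r i j → r i k → r j k) ∧ (r i k → r j k → r i j)) :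
    ∀ {a b c}, r a b → r b c → r a c := by
  have of_lt : ∀ {a b c}, a < c → r a b → r b c → r a c := by
    intro a b c hac hab hbc
    rcases lt_trichotomy a b with hab' | rfl | hba
    · rcases lt_trichotomy b c with hbc' | rfl | hcb
      exacts [(tri hab' hbc').1 hab hbc, hab, (tri hac hcb).2.2 hab (symm hbc)]
    · exact hbc
    · exact (tri hba hac).2.1 (symm hab) hbc
  intro a b c hab hbc
  rcases lt_trichotomy a c with hac | rfl | hca
  exacts [of_lt hac hab hbc, refl a, symm (of_lt hca (symm hbc) (symm hab))]

theorem mul_eq_left_of_triangle {N : Type*} [CommMonoid N] {x X Y Z : N}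
    (hYZ : X * Y = Y * Z) (hZ : IsIdempotentElem Z)
    (hX : x * X = x) (hY : x * Y = x) : x * Z = x :=
  calc x * Z = x * (X * Y) * Z := by rw [← mul_assoc, hX, hY]
    _ = x * (Y * (Z * Z)) := by rw [hYZ, mul_assoc, mul_assoc]
    _ = x := by rw [hZ.eq, ← hYZ, ← mul_assoc, hX, hY]

namespace PresentedMonoid

variable {α : Type*} {rels : FreeMonoid α → FreeMonoid α → Prop}

@[elab_as_elim]
theorem induction_on_of {motive : PresentedMonoid rels → Prop} (x : PresentedMonoid rels)
    (one : motive 1) (of : ∀ a, motive (of rels a))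
    (mul : ∀ x y, motive x → motive y → motive (x * y)) : motive x := by
  induction x with | _ w
  induction w with
  | one => exact one
  | of a => exact of a
  | mul u v hu hv => simpa only [map_mul] using mul _ _ hu hv

abbrev commMonoidOfCommute (h : ∀ a b, of rels a * of rels b = of rels b * of rels a) :
    CommMonoid (PresentedMonoid rels) :=
  { (inferInstance : Monoid (PresentedMonoid rels)) with
    mul_comm := fun x y => by
      have hle := Submonoid.closure_le_centralizer_centralizer (Set.range (of rels))
      rw [closure_range_of] at hle
      exact Set.centralizer_centralizer_comm_of_comm (by rintro _ ⟨a, rfl⟩ _ ⟨b, rfl⟩; exact h a b)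
        x (hle trivial) y (hle trivial) }

end PresentedMonoid

namespace PRel

variable {n : ℕ}

abbrev gen (p : PGen n) : PresentedMonoid (PRel n) := PresentedMonoid.of (PRel n) p

theorem gen_mul_self (p : PGen n) : gen p * gen p = gen p := by
  have h := PresentedMonoid.mk_eq_mk_of_rel (P1 p)
  rwa [map_mul] at h

theorem gen_mul_comm (p q : PGen n) : gen p * gen q = gen q * gen p := by
  have h := PresentedMonoid.mk_eq_mk_of_rel (P2 p q)
  rwa [map_mul, map_mul] at h

theorem gen_triangle_left {i j k : Fin n} (hij : i < j) (hjk : j < k) :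
    gen ⟨(i, j), hij⟩ * gen ⟨(j, k), hjk⟩ = gen ⟨(i, j), hij⟩ * gen ⟨(i, k), hij.trans hjk⟩ := by
  have h := PresentedMonoid.mk_eq_mk_of_rel (P3a i j k hij hjk)
  rwa [map_mul, map_mul] at h

theorem gen_triangle_right {i j k : Fin n} (hij : i < j) (hjk : j < k) :
    gen ⟨(i, j), hij⟩ * gen ⟨(j, k), hjk⟩ = gen ⟨(j, k), hjk⟩ * gen ⟨(i, k), hij.trans hjk⟩ := by
  have h := PresentedMonoid.mk_eq_mk_of_rel (P3b i j k hij hjk)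
  rwa [map_mul, map_mul] at h

instance : CommMonoid (PresentedMonoid (PRel n)) :=
  PresentedMonoid.commMonoidOfCommute gen_mul_comm

def pairGen (a b : Fin n) : PresentedMonoid (PRel n) :=
  if h : a < b then gen ⟨(a, b), h⟩ else if h : b < a then gen ⟨(b, a), h⟩ else 1

theorem pairGen_of_lt {a b : Fin n} (h : a < b) : pairGen a b = gen ⟨(a, b), h⟩ := dif_pos h

theorem pairGen_self (a : Fin n) : pairGen a a = 1 := by simp [pairGen]

theorem pairGen_comm (a b : Fin n) : pairGen a b = pairGen b a := by
  rcases lt_trichotomy a b with h | rfl | h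
  · rw [pairGen_of_lt h, pairGen, dif_neg h.not_gt, dif_pos h]
  · rfl
  · rw [pairGen_of_lt h, pairGen, dif_neg h.not_gt, dif_pos h]

theorem mul_pairGen_self (x : PresentedMonoid (PRel n)) (a : Fin n) : x * pairGen a a = x := by
  rw [pairGen_self, mul_one]

theorem mul_pairGen_trans (x : PresentedMonoid (PRel n)) {a b c : Fin n}
    (hab : x * pairGen a b = x) (hbc : x * pairGen b c = x) : x * pairGen a c = x := by
  refine transitive_of_forall_lt_lt (r := fun a b => x * pairGen a b = x)
    (mul_pairGen_self x) (fun h => pairGen_comm _ _ ▸ h)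
    (fun i j k hij hjk => ?_) hab hbc
  simp only [pairGen_of_lt hij, pairGen_of_lt hjk, pairGen_of_lt (hij.trans hjk)]
  have hl := gen_triangle_left hij hjk
  have hr := gen_triangle_right hij hjk
  refine ⟨mul_eq_left_of_triangle hr (gen_mul_self _), mul_eq_left_of_triangle ?_ (gen_mul_self _),
    mul_eq_left_of_triangle ?_ (gen_mul_self _)⟩
  · rw [← hl, hr]
    exact mul_comm _ _
  · rw [mul_comm, ← hr]
    exact mul_comm _ _

def absorbing (x : PresentedMonoid (PRel n)) : Setoid (Fin n) where
  r a b := x * pairGen a b = x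
  iseqv := ⟨mul_pairGen_self x, fun h => pairGen_comm _ _ ▸ h, mul_pairGen_trans x⟩

theorem absorbing_le_absorbing_mul (x y : PresentedMonoid (PRel n)) :
    absorbing x ≤ absorbing (x * y) :=
  Setoid.le_def.mpr fun {a b} (h : x * pairGen a b = x) =>
    show x * y * pairGen a b = x * y by rw [mul_right_comm, h]

def toPartition : PresentedMonoid (PRel n) →* Setoid (Fin n) :=
  PresentedMonoid.lift (fun p => mu p.1.1 p.1.2) fun _ _ h => by
    cases h <;> simp only [map_mul, FreeMonoid.lift_eval_of, Setoid.mul_eq_sup]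
    exacts [sup_idem _, sup_comm _ _, mu_sup_mu_eq_left _ _ _, mu_sup_mu_eq_right _ _ _]

theorem toPartition_pairGen (a b : Fin n) : toPartition (pairGen a b) = mu a b := by
  rcases lt_trichotomy a b with h | rfl | h
  · rw [pairGen_of_lt h]; rfl
  · rw [pairGen_self, mu_self, map_one]; rfl
  · rw [pairGen_comm, pairGen_of_lt h, mu_comm]; rfl

theorem toPartition_le_absorbing (x : PresentedMonoid (PRel n)) : toPartition x ≤ absorbing x := by
  induction x using PresentedMonoid.induction_on_of with
  | one => exact bot_le
  | of p =>
    refine mu_le_iff.mpr (?_ : gen p * pairGen p.1.1 p.1.2 = gen p)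
    rw [pairGen_of_lt p.2]
    exact gen_mul_self p
  | mul x y hx hy =>
    rw [map_mul, Setoid.mul_eq_sup]
    refine sup_le (hx.trans (absorbing_le_absorbing_mul x y)) ?_
    rw [mul_comm]
    exact hy.trans (absorbing_le_absorbing_mul y x)

theorem mul_eq_left_of_toPartition_le {x y : PresentedMonoid (PRel n)}
    (h : toPartition y ≤ absorbing x) : x * y = x := by
  induction y using PresentedMonoid.induction_on_of with
  | one => exact mul_one x
  | of p =>
    have hp : x * pairGen p.1.1 p.1.2 = x := mu_le_iff.mp h
    rwa [pairGen_of_lt p.2] at hp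
  | mul y z hy hz =>
    rw [map_mul, Setoid.mul_eq_sup, sup_le_iff] at h
    rw [← mul_assoc, hy h.1, hz h.2]

theorem toPartition_injective : Function.Injective (toPartition (n := n)) := fun x y h =>
  calc x = x * y := (mul_eq_left_of_toPartition_le (h ▸ toPartition_le_absorbing x)).symm
    _ = y * x := mul_comm x y
    _ = y := mul_eq_left_of_toPartition_le (h.symm ▸ toPartition_le_absorbing y)

theorem toPartition_surjective : Function.Surjective (toPartition (n := n)) := by
  classical
  intro s
  change s ∈ MonoidHom.mrange toPartition
  rw [← iSup_mu_eq s, ← Finset.sup_univ_eq_iSup]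
  exact Finset.sup_induction (one_mem _) (fun _ h₁ _ h₂ => mul_mem h₁ h₂)
    fun q _ => ⟨pairGen q.1.1 q.1.2, toPartition_pairGen _ _⟩

end PRel

theorem presentedMonoid_isomorphic_partition_monoid_general (n : ℕ) :
    ∃ φ : PresentedMonoid (PRel n) ≃* Setoid (Fin n),
      ∀ a : PGen n, φ (PresentedMonoid.of (PRel n) a) = mu a.1.1 a.1.2 :=
  ⟨MulEquiv.ofBijective PRel.toPartition ⟨PRel.toPartition_injective, PRel.toPartition_surjective⟩,
    fun _ => rfl⟩

/-- FitzGerald.  The monoid presented by the generators `m_{i,j}` (for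
`i < j` in `Fin n`) subject to relations (P1)–(P3) is isomorphic to the set-partition
monoid `P_n = Setoid (Fin n)`, via an isomorphism sending `m_{i,j}` to `μ_{i,j}`. -/
theorem presentedMonoid_isomorphic_partition_monoid (n : ℕ) (hn : 2 ≤ n) :
    ∃ φ : PresentedMonoid (PRel n) ≃* Setoid (Fin n),
      ∀ a : PGen n, φ (PresentedMonoid.of (PRel n) a) = mu a.1.1 a.1.2 :=
  presentedMonoid_isomorphic_partition_monoid_general n
end

section
/- Let n ≥ 2 and let r_1, …, r_k ∈ {1,…,n} (k ≥ 2) be pairwise distinct. In the partition monoid P_n, writing C := μ_{r_1,r_2} ⊔ ⋯ ⊔ μ_{r_{k−1},r_k}, the following identities hold for i < j in {1,…,n}: (1) if i = r_1 and j = r_k then C ⊔ μ_{i,j} = C; (2) if i < r_1 and j = r_k then C ⊔ μ_{i,j} = μ_{i,r_1} ⊔ C; (3) if i = r_1 and j > r_k then C ⊔ μ_{i,j} = C ⊔ μ_{r_k,j}; (4) if r_1 < i < r_2 and j = r_k then C ⊔ μ_{i,j} = μ_{r_1,i} ⊔ μ_{i,r_2} ⊔ μ_{r_2,r_3} ⊔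 ⋯ ⊔ μ_{r_{k−1},r_k}; (5) if i = r_1 and r_{k−1} < j < r_k then C ⊔ μ_{i,j} = μ_{r_1,r_2} ⊔ ⋯ ⊔ μ_{r_{k−2},r_{k−1}} ⊔ μ_{r_{k−1},j} ⊔ μ_{j,r_k}. -/
/-- `chainJoin [r₁, …, r_k] = μ_{r₁,r₂} ⊔ μ_{r₂,r₃} ⊔ ⋯ ⊔ μ_{r_{k-1},r_k}` (and `⊥` if
the list has fewer than two entries). -/
def chainJoin {α : Type*} : List α → Setoid α
  | [] => ⊥
  | [_] => ⊥
  | a :: b :: l => mu a b ⊔ chainJoin (b :: l)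

/-! Joining two partitions whose non-singleton blocks overlap merges the blocks:
`muSet X ⊔ muSet Y = muSet (X ∪ Y)` when `X ∩ Y` is nonempty. Hence a chain join is the
one-block partition on the entries of the chain, so in each of the five identities both sides
are one-block partitions, and their blocks coincide because `{i, j}` meets the chain. -/

section

variable {α : Type*}

theorem muSet_rel {X : Set α} {x y : α} (hx : x ∈ X) (hy : y ∈ X) :
    muSet X x y :=
  Relation.EqvGen.rel _ _ ⟨hx, hy⟩

theorem muSet_mono {X Y : Set α} (h : X ⊆ Y) : muSet X ≤ muSet Y :=
  Setoid.eqvGen_mono fun _ _ hr => ⟨h hr.1, h hr.2⟩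

theorem muSet_eq_bot_of_subsingleton {X : Set α} (h : X.Subsingleton) : muSet X = ⊥ :=
  le_bot_iff.mp <| Setoid.eqvGen_le fun _ _ hxy => h hxy.1 hxy.2

theorem muSet_union {X Y : Set α} (h : (X ∩ Y).Nonempty) :
    muSet (X ∪ Y) = muSet X ⊔ muSet Y := by
  obtain ⟨z, hzX, hzY⟩ := h
  refine le_antisymm (Setoid.eqvGen_le fun x y hxy => ?_)
    (sup_le (muSet_mono Set.subset_union_left) (muSet_mono Set.subset_union_right))
  have hz : ∀ w ∈ X ∪ Y, (muSet X ⊔ muSet Y) w z := by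
    rintro w (hw | hw)
    · exact le_sup_left (α := Setoid α) (muSet_rel hw hzX)
    · exact le_sup_right (α := Setoid α) (muSet_rel hw hzY)
  exact (muSet X ⊔ muSet Y).trans (hz x hxy.1) ((muSet X ⊔ muSet Y).symm (hz y hxy.2))

theorem muSet_sup_mu {X : Set α} {i : α} (hi : i ∈ X) (j : α) :
    muSet X ⊔ mu i j = muSet (insert j X) := by
  rw [mu, ← muSet_union ⟨i, hi, Set.mem_insert i _⟩, Set.union_insert, Set.union_singleton,
    Set.insert_eq_of_mem (Set.mem_insert_of_mem j hi)]

theorem chainJoin_eq_muSet : ∀ l : List α, chainJoin l = muSet {x | x ∈ l}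
  | [] => (muSet_eq_bot_of_subsingleton (by simp)).symm
  | [_] => (muSet_eq_bot_of_subsingleton (by simp)).symm
  | a :: b :: l => by
    rw [chainJoin, chainJoin_eq_muSet (b :: l), mu,
      ← muSet_union ⟨b, by simp, by simp⟩]
    congr 1
    ext x
    simp only [Set.mem_union, Set.mem_insert_iff, Set.mem_singleton_iff, Set.mem_ofPred_eq,
      List.mem_cons]
    tauto

end

theorem chainJoin_sup_mu_general (n : ℕ) (l : List (Fin n)) (i j : Fin n) :
    -- (1) i = r₁ and j = r_k
    (∀ mid : List (Fin n), l = i :: (mid ++ [j]) →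
        chainJoin l ⊔ mu i j = chainJoin l) ∧
    -- (2) i < r₁ and j = r_k
    (∀ (r₁ : Fin n) (mid : List (Fin n)), l = r₁ :: (mid ++ [j]) → i < r₁ →
        chainJoin l ⊔ mu i j = mu i r₁ ⊔ chainJoin l) ∧
    -- (3) i = r₁ and j > r_k
    (∀ (rk : Fin n) (mid : List (Fin n)), l = i :: (mid ++ [rk]) → rk < j →
        chainJoin l ⊔ mu i j = chainJoin l ⊔ mu rk j) ∧
    -- (4) r₁ < i < r₂ and j = r_k
    (∀ (r₁ : Fin n) (back : List (Fin n)) (hb : back ≠ []), l = r₁ :: back →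
        back.getLast hb = j → r₁ < i → i < back.head hb →
        chainJoin l ⊔ mu i j = chainJoin (r₁ :: i :: back)) ∧
    -- (5) i = r₁ and r_{k-1} < j < r_k
    (∀ (front : List (Fin n)) (rk : Fin n) (hf : front ≠ []), l = front ++ [rk] →
        front.head hf = i → front.getLast hf < j → j < rk →
        chainJoin l ⊔ mu i j = chainJoin (front ++ [j, rk])) := by
  simp only [chainJoin_eq_muSet]
  refine ⟨?_, ?_, ?_, ?_, ?_⟩
  · rintro mid rfl
    rw [muSet_sup_mu (by simp), Set.insert_eq_of_mem (by simp)]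
  · rintro r₁ mid rfl -
    rw [mu_comm, muSet_sup_mu (by simp), sup_comm, mu_comm, muSet_sup_mu (by simp)]
  · rintro rk mid rfl -
    rw [muSet_sup_mu (by simp), muSet_sup_mu (by simp)]
  · rintro r₁ back hb rfl rfl - -
    rw [mu_comm, muSet_sup_mu (by simp [List.getLast_mem])]
    congr 1
    ext x
    simp only [Set.mem_insert_iff, Set.mem_ofPred_eq, List.mem_cons]
    tauto
  · rintro front rk hf rfl rfl - -
    rw [muSet_sup_mu (by simp [List.head_mem])]
    congr 1
    ext x
    simp only [Set.mem_insert_iff, Set.mem_ofPred_eq, List.mem_append, List.mem_cons,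
      List.not_mem_nil, or_false]
    tauto

/-- Corollary of (P3).  Let `r₁, …, r_k` (`k ≥ 2`) be pairwise distinct
elements of `Fin n`, encoded as a list `l` with no duplicates, and let
`C = μ_{r₁,r₂} ⊔ ⋯ ⊔ μ_{r_{k-1},r_k} = chainJoin l`.  Then for `i < j`:
(1) if `i = r₁`, `j = r_k` then `C ⊔ μ_{i,j} = C`;
(2) if `i < r₁`, `j = r_k` then `C ⊔ μ_{i,j} = μ_{i,r₁} ⊔ C`;
(3) if `i = r₁`, `j > r_k` then `C ⊔ μ_{i,j} = C ⊔ μ_{r_k,j}`;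
(4) if `r₁ < i < r₂`, `j = r_k` then `C ⊔ μ_{i,j} = μ_{r₁,i} ⊔ μ_{i,r₂} ⊔ μ_{r₂,r₃} ⊔ ⋯`;
(5) if `i = r₁`, `r_{k-1} < j < r_k` then `C ⊔ μ_{i,j} = μ_{r₁,r₂} ⊔ ⋯ ⊔ μ_{r_{k-1},j} ⊔ μ_{j,r_k}`. -/
theorem chainJoin_sup_mu (n : ℕ) (hn : 2 ≤ n) (l : List (Fin n))
    (hlen : 2 ≤ l.length) (hnd : l.Nodup) (i j : Fin n) (hij : i < j) :
    -- (1) i = r₁ and j = r_k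
    (∀ mid : List (Fin n), l = i :: (mid ++ [j]) →
        chainJoin l ⊔ mu i j = chainJoin l) ∧
    -- (2) i < r₁ and j = r_k
    (∀ (r₁ : Fin n) (mid : List (Fin n)), l = r₁ :: (mid ++ [j]) → i < r₁ →
        chainJoin l ⊔ mu i j = mu i r₁ ⊔ chainJoin l) ∧
    -- (3) i = r₁ and j > r_k
    (∀ (rk : Fin n) (mid : List (Fin n)), l = i :: (mid ++ [rk]) → rk < j →
        chainJoin l ⊔ mu i j = chainJoin l ⊔ mu rk j) ∧
    -- (4) r₁ < i < r₂ and j = r_k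
    (∀ (r₁ : Fin n) (back : List (Fin n)) (hb : back ≠ []), l = r₁ :: back →
        back.getLast hb = j → r₁ < i → i < back.head hb →
        chainJoin l ⊔ mu i j = chainJoin (r₁ :: i :: back)) ∧
    -- (5) i = r₁ and r_{k-1} < j < r_k
    (∀ (front : List (Fin n)) (rk : Fin n) (hf : front ≠ []), l = front ++ [rk] →
        front.head hf = i → front.getLast hf < j → j < rk →
        chainJoin l ⊔ mu i j = chainJoin (front ++ [j, rk])) :=
  chainJoin_sup_mu_general n l i j
end

section
/- Let n ≥ 2. The set E_n := {ε_{i,j} : i, j ∈ [±n], i < j} generates SP_n as a monoid (every signed partition of [±n] is a finite join of elements of E_n), and the cardinality of E_n is n². -/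
/-- `[±n]`: nonzero integers of absolute value at most `n`, with the order from `ℤ`. -/
abbrev PM (n : ℕ) := {k : ℤ // k ≠ 0 ∧ |k| ≤ (n : ℤ)}

namespace PM

/-- The negation involution `k ↦ -k` on `[±n]`. -/
def neg {n : ℕ} (x : PM n) : PM n :=
  ⟨-x.1, by obtain ⟨h1, h2⟩ := x.2; exact ⟨neg_ne_zero.mpr h1, by rwa [abs_neg]⟩⟩

@[simp] theorem neg_neg {n : ℕ} (x : PM n) : x.neg.neg = x := Subtype.ext (by simp [neg])

theorem neg_lt_neg {n : ℕ} {x y : PM n} (h : x < y) : y.neg < x.neg := by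
  have h' : x.1 < y.1 := Subtype.coe_lt_coe.mpr h
  rw [← Subtype.coe_lt_coe]
  show -y.1 < -x.1
  omega

theorem neg_lt_pos {n : ℕ} {x y : PM n} (hx : 0 < x.1) (hy : 0 < y.1) : x.neg < y := by
  rw [← Subtype.coe_lt_coe]
  show -x.1 < y.1
  omega

theorem pos_ne_neg {n : ℕ} {x y : PM n} (hx : 0 < x.1) (hy : 0 < y.1) : y ≠ x.neg := by
  intro h
  have : y.1 = -x.1 := congrArg Subtype.val h
  omega

theorem neg_lt_self {n : ℕ} {x : PM n} (hx : 0 < x.1) : x.neg < x := neg_lt_pos hx hx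

/-- The absolute value map `x ↦ |x|` from `[±n]` to its positive part. -/
def abs {n : ℕ} (x : PM n) : PM n :=
  ⟨|x.1|, by obtain ⟨h1, h2⟩ := x.2; exact ⟨abs_ne_zero.mpr h1, by rwa [abs_abs]⟩⟩

end PM

/-- Image of a subset of `[±n]` under negation. -/
def negSet {n : ℕ} (K : Set (PM n)) : Set (PM n) := PM.neg '' K

/-- The partition `I⁻` transported along negation: `x ∼ y` in `negPart I` iff `-x ∼ -y` in `I`. -/
def negPart {n : ℕ} (I : Setoid (PM n)) : Setoid (PM n) := Setoid.comap PM.neg I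

/-- A set partition `I` of `[±n]` is *signed* if for every block `K` of `I` the set `-K` is
also a block; equivalently, `x ∼ y ↔ -x ∼ -y` for all `x, y`. -/
def IsSigned {n : ℕ} (I : Setoid (PM n)) : Prop :=
  ∀ x y : PM n, I x y ↔ I (PM.neg x) (PM.neg y)

/-- A *zero block* of a partition `I` is a block `K` with `-K = K`. -/
def IsZeroBlock {n : ℕ} (I : Setoid (PM n)) (K : Set (PM n)) : Prop :=
  K ∈ I.classes ∧ negSet K = K

/-- A `Bₙ`-partition: a signed partition of `[±n]` with at most one zero block. -/
def IsBPart {n : ℕ} (I : Setoid (PM n)) : Prop :=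
  IsSigned I ∧ Set.Subsingleton {K | IsZeroBlock I K}

/-- A *restricted* signed partition: all its zero blocks have more than two elements. -/
def IsRestricted {n : ℕ} (I : Setoid (PM n)) : Prop :=
  IsSigned I ∧ ∀ K : Set (PM n), IsZeroBlock I K → 2 < K.ncard

/-- A `Dₙ`-partition: a `Bₙ`-partition whose zero block (if present) has more than two
elements. -/
def IsDPart {n : ℕ} (I : Setoid (PM n)) : Prop :=
  IsBPart I ∧ ∀ K : Set (PM n), IsZeroBlock I K → 2 < K.ncard

/-- For `i < j` in `[±n]`, the signed partition `ε_{i,j} = μ_{-j,-i} ⊔ μ_{i,j}`. -/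
def eps {n : ℕ} (i j : PM n) : Setoid (PM n) := mu (PM.neg j) (PM.neg i) ⊔ mu i j

/-- The generating set `Eₙ = {ε_{i,j} : i, j ∈ [±n], i < j}`. -/
def En (n : ℕ) : Set (Setoid (PM n)) := {x | ∃ i j : PM n, i < j ∧ x = eps i j}

/-! A partition `I` is signed iff `I ≤ negPart I`, a condition preserved by joins because
`negPart` is monotone; `ε_{i,j}` satisfies it because negation swaps its two generating pairs.
Conversely, a signed `I` is the join of the `ε_{i,j}` over its related pairs `i < j`, since
`I i j` forces `I (-j) (-i)`.

Since `ε_{i,j} = ε_{-j,-i}`, every element of `Eₙ` has a unique index `(i, j)` with `0 < j` and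
`-j ≤ i < j`. Sending `(i, j)` to `(i, j)` if `i > 0` and to `(j, -i)` if `i < 0` puts these
indices in bijection with `[1, n] × [1, n]`. -/

section Mu

variable {α : Type*}

theorem mu_le {i j : α} {I : Setoid α} (hij : I i j) : mu i j ≤ I :=
  Setoid.eqvGen_le fun x y ⟨hx, hy⟩ => by
    obtain rfl | rfl := hx <;> obtain rfl | rfl := hy
    exacts [I.refl _, hij, I.symm hij, I.refl _]

end Mu

namespace PM

instance (n : ℕ) : Finite (PM n) :=
  ((Set.finite_Icc (-(n : ℤ)) n).subset (t := {k : ℤ | k ≠ 0 ∧ |k| ≤ n})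
    fun _ hk => abs_le.mp hk.2).to_subtype

@[simp] theorem neg_val {n : ℕ} (x : PM n) : x.neg.1 = -x.1 := rfl

end PM

section SignedPartitions

variable {n : ℕ}

theorem isSigned_iff_le_negPart {I : Setoid (PM n)} : IsSigned I ↔ I ≤ negPart I := by
  refine ⟨fun h x y hxy => (h x y).1 hxy, fun h x y => ⟨fun hxy => h hxy, fun hxy => ?_⟩⟩
  simpa only [PM.neg_neg] using show I x.neg.neg y.neg.neg from h hxy

theorem negPart_mono {I J : Setoid (PM n)} (h : I ≤ J) : negPart I ≤ negPart J :=
  fun _ _ hxy => h hxy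

theorem isSigned_sup {I J : Setoid (PM n)} (hI : IsSigned I) (hJ : IsSigned J) :
    IsSigned (I ⊔ J) := by
  rw [isSigned_iff_le_negPart] at *
  exact sup_le (hI.trans (negPart_mono le_sup_left)) (hJ.trans (negPart_mono le_sup_right))

def signedSubmonoid (n : ℕ) : Submonoid (Setoid (PM n)) where
  carrier := {I | IsSigned I}
  one_mem' := isSigned_iff_le_negPart.2 bot_le
  mul_mem' := isSigned_sup

theorem eps_rel (i j : PM n) : eps i j i j :=
  le_sup_right (a := mu j.neg i.neg) (mu_rel i j)

theorem eps_neg (i j : PM n) : eps j.neg i.neg = eps i j := by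
  rw [eps, eps, PM.neg_neg, PM.neg_neg, sup_comm]

theorem isSigned_eps (i j : PM n) : IsSigned (eps i j) := by
  rw [isSigned_iff_le_negPart]
  refine sup_le (mu_le ?_) (mu_le ?_)
  · show eps i j j.neg.neg i.neg.neg
    rw [PM.neg_neg, PM.neg_neg]
    exact (eps i j).symm (eps_rel i j)
  · exact (eps i j).symm (le_sup_left (b := mu i j) (mu_rel j.neg i.neg))

theorem eps_le_iff {I : Setoid (PM n)} (hI : IsSigned I) {i j : PM n} :
    eps i j ≤ I ↔ I i j :=
  ⟨fun h => h (eps_rel i j), fun h => sup_le (mu_le (I.symm ((hI i j).1 h))) (mu_le h)⟩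

theorem eps_rel_cases {i j x y : PM n} (h : eps i j x y) :
    x.1 = y.1 ∨ ((x.1 = i.1 ∨ x.1 = j.1) ∧ (y.1 = i.1 ∨ y.1 = j.1)) ∨
      ((x.1 = -i.1 ∨ x.1 = -j.1) ∧ (y.1 = -i.1 ∨ y.1 = -j.1)) := by
  -- `E` is transitive only because `i, j ≠ 0`: otherwise `{i, j}` and `{-i, -j}` could
  -- share exactly one point.
  have hi := i.2.1
  have hj := j.2.1
  let E : Setoid (PM n) :=
    ⟨fun x y => x.1 = y.1 ∨ ((x.1 = i.1 ∨ x.1 = j.1) ∧ (y.1 = i.1 ∨ y.1 = j.1)) ∨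
      ((x.1 = -i.1 ∨ x.1 = -j.1) ∧ (y.1 = -i.1 ∨ y.1 = -j.1)),
      ⟨fun _ => by omega, fun _ => by omega, fun _ _ => by omega⟩⟩
  have hle : eps i j ≤ E :=
    sup_le (mu_le (Or.inr (Or.inr ⟨Or.inr rfl, Or.inl rfl⟩)))
      (mu_le (Or.inr (Or.inl ⟨Or.inl rfl, Or.inr rfl⟩)))
  exact hle h

theorem mem_closure_En_of_isSigned {I : Setoid (PM n)} (hI : IsSigned I) :
    I ∈ Submonoid.closure (En n) := by
  set s := (Set.toFinite {p : PM n × PM n | p.1 < p.2 ∧ I p.1 p.2}).toFinset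
  have hs (p : PM n × PM n) : p ∈ s ↔ p.1 < p.2 ∧ I p.1 p.2 := Set.Finite.mem_toFinset _
  have hI_eq : I = s.sup fun p => eps p.1 p.2 := by
    refine le_antisymm (fun x y hxy => ?_)
      (Finset.sup_le fun p hp => (eps_le_iff hI).2 ((hs p).1 hp).2)
    rcases lt_trichotomy x y with hlt | rfl | hgt
    · exact Finset.le_sup (f := fun p => eps p.1 p.2) ((hs (x, y)).2 ⟨hlt, hxy⟩) (eps_rel x y)
    · exact Setoid.refl' _ x
    · exact Setoid.symm' _ <| Finset.le_sup (f := fun p => eps p.1 p.2)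
        ((hs (y, x)).2 ⟨hgt, I.symm hxy⟩) (eps_rel y x)
  rw [hI_eq]
  exact Finset.sup_induction (Submonoid.one_mem _) (fun _ ha _ hb => Submonoid.mul_mem _ ha hb)
    fun p hp => Submonoid.subset_closure ⟨p.1, p.2, ((hs p).1 hp).1, rfl⟩

theorem closure_En_eq_isSigned (n : ℕ) :
    (Submonoid.closure (En n) : Set (Setoid (PM n))) = {I | IsSigned I} := by
  refine Set.Subset.antisymm ?_ fun I hI => mem_closure_En_of_isSigned hI
  refine (Submonoid.closure_le (S := signedSubmonoid n)).2 ?_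
  rintro _ ⟨i, j, -, rfl⟩
  exact isSigned_eps i j

def epsIndex (n : ℕ) : Set (PM n × PM n) :=
  {p | 0 < p.2.1 ∧ -p.2.1 ≤ p.1.1 ∧ p.1.1 < p.2.1}

theorem En_eq_image_epsIndex (n : ℕ) :
    En n = (fun p : PM n × PM n => eps p.1 p.2) '' epsIndex n := by
  ext x
  constructor
  · rintro ⟨i, j, hij, rfl⟩
    have hij' : i.1 < j.1 := hij
    by_cases h : 0 < j.1 ∧ -j.1 ≤ i.1
    · exact ⟨(i, j), ⟨h.1, h.2, hij'⟩, rfl⟩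
    · have hi := i.2.1
      exact ⟨(j.neg, i.neg), by simp only [epsIndex, Set.mem_ofPred_eq, PM.neg_val]; omega,
        eps_neg i j⟩
  · rintro ⟨p, ⟨-, -, hp⟩, rfl⟩
    exact ⟨p.1, p.2, hp, rfl⟩

theorem eps_injOn_epsIndex (n : ℕ) :
    Set.InjOn (fun p : PM n × PM n => eps p.1 p.2) (epsIndex n) := by
  rintro ⟨i, j⟩ ⟨hj, hij, hij'⟩ ⟨k, l⟩ ⟨hl, hkl, hkl'⟩ heq
  have hrel : eps k l i j := by
    rw [← show eps i j = eps k l from heq]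
    exact eps_rel i j
  replace hrel := eps_rel_cases hrel
  have hk := k.2.1
  have hval : i.1 = k.1 ∧ j.1 = l.1 := by dsimp only at *; omega
  exact Prod.ext (Subtype.ext hval.1) (Subtype.ext hval.2)

theorem ncard_epsIndex (n : ℕ) : (epsIndex n).ncard = n ^ 2 := by
  let fold (p : PM n × PM n) (_ : p ∈ epsIndex n) : ℤ × ℤ :=
    if 0 < p.1.1 then (p.1.1, p.2.1) else (p.2.1, -p.1.1)
  let square : Finset (ℤ × ℤ) := Finset.Icc 1 (n : ℤ) ×ˢ Finset.Icc 1 (n : ℤ)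
  have hsquare : square.card = n ^ 2 := by simp [square, sq]
  rw [← hsquare, ← Set.ncard_coe_finset]
  refine Set.ncard_congr fold (fun p hp => ?_) (fun p q hp hq hpq => ?_) (fun c hc => ?_)
  · obtain ⟨hj, hij, hij'⟩ := hp
    have hi := p.1.2.1
    have hjn := (abs_le.mp p.2.2.2).2
    simp only [fold, square, Finset.coe_product, Set.mem_prod, Finset.coe_Icc, Set.mem_Icc]
    split_ifs <;> omega
  · obtain ⟨hpj, hpij, hpij'⟩ := hp
    obtain ⟨hqj, hqij, hqij'⟩ := hq
    have hpi := p.1.2.1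
    have hqi := q.1.2.1
    simp only [fold, Prod.ext_iff] at hpq
    have hval : p.1.1 = q.1.1 ∧ p.2.1 = q.2.1 := by split_ifs at hpq <;> omega
    exact Prod.ext (Subtype.ext hval.1) (Subtype.ext hval.2)
  · obtain ⟨⟨hc1, hc1'⟩, hc2, hc2'⟩ : (1 ≤ c.1 ∧ c.1 ≤ n) ∧ 1 ≤ c.2 ∧ c.2 ≤ n := by
      simpa only [square, Finset.coe_product, Set.mem_prod, Finset.coe_Icc, Set.mem_Icc]
        using hc
    by_cases hlt : c.1 < c.2
    · refine ⟨(⟨c.1, by omega, abs_le.mpr ⟨by omega, hc1'⟩⟩,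
        ⟨c.2, by omega, abs_le.mpr ⟨by omega, hc2'⟩⟩),
        by simp only [epsIndex, Set.mem_ofPred_eq]; omega, ?_⟩
      simp only [fold, if_pos (show (0 : ℤ) < c.1 by omega)]
    · refine ⟨(⟨-c.2, by omega, abs_le.mpr ⟨by omega, by omega⟩⟩,
        ⟨c.1, by omega, abs_le.mpr ⟨by omega, hc1'⟩⟩),
        by simp only [epsIndex, Set.mem_ofPred_eq]; omega, ?_⟩
      simp only [fold, if_neg (show ¬(0 : ℤ) < -c.2 by omega), neg_neg]

end SignedPartitions

theorem En_generates_SPn_and_card_general (n : ℕ) :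
    (Submonoid.closure (En n) : Set (Setoid (PM n))) = {I | IsSigned I} ∧
      (En n).ncard = n ^ 2 := by
  refine ⟨closure_En_eq_isSigned n, ?_⟩
  rw [En_eq_image_epsIndex, (eps_injOn_epsIndex n).ncard_image, ncard_epsIndex]

/-- `Eₙ` generates the monoid `SPₙ` of signed partitions of `[±n]`
(the submonoid generated by `Eₙ` is exactly the set of signed partitions), and
`|Eₙ| = n²`. -/
theorem En_generates_SPn_and_card (n : ℕ) (hn : 2 ≤ n) :
    (Submonoid.closure (En n) : Set (Setoid (PM n))) = {I | IsSigned I} ∧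
      (En n).ncard = n ^ 2 :=
  En_generates_SPn_and_card_general n
end
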